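/- For all belief correspondences P_1, …, P_n on a nonempty set of states Ω and every event E ⊆ Ω, the common belief event satisfies □*E = ⋃{ F ⊆ Ω | F ⊆ □(E ∩ F) }. -/

import Mathlib

/-!
Possibility correspondences on a nonempty set of states `Ω`.
`□E = {ω | ∀ i, P i ω ⊆ E}`, `□^(k+1) E = □(□^k E)`, and the common belief
event is `□*E = ⋂_{k ≥ 1} □^k E`.
-/

open Set

/-- `□E`: the event that every player believes (knows) the event `E`. -/
def box {ι Ω : Type*} (P : ι → Ω → Set Ω) (E : Set Ω) : Set Ω :=
  {ω | ∀ i, P i ω ⊆ E}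

/-- `□*E`: the common belief event, `⋂_{k ≥ 1} □^k E`. -/
def commonBelief {ι Ω : Type*} (P : ι → Ω → Set Ω) (E : Set Ω) : Set Ω :=
  ⋂ k : ℕ, (box P)^[k + 1] E

/-! Since `□` commutes with intersections, `□(E ∩ □*E) = ⋂_{k ≥ 1} □^k E = □*E`; conversely,
if `F ⊆ □(E ∩ F)` then monotonicity of `□` and induction on `k` give `F ⊆ □^(k+1) E` for all `k`.
So `□*E` is the largest event `F` with `F ⊆ □(E ∩ F)`. -/

section

variable {ι Ω : Type*} (P : ι → Ω → Set Ω)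

theorem box_mono : Monotone (box P) :=
  fun _ _ hAB _ hω i => (hω i).trans hAB

theorem box_iInter {κ : Sort*} (A : κ → Set Ω) : box P (⋂ k, A k) = ⋂ k, box P (A k) := by
  ext ω
  simp only [box, mem_iInter, subset_iInter_iff]
  exact forall_comm

theorem iInter_iterate_box (E : Set Ω) : ⋂ k : ℕ, (box P)^[k] E = E ∩ commonBelief P E := by
  ext ω
  simp only [commonBelief, mem_inter_iff, mem_iInter]
  exact Nat.and_forall_add_one.symm

theorem box_inter_commonBelief (E : Set Ω) : box P (E ∩ commonBelief P E) = commonBelief P E := by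
  rw [← iInter_iterate_box, box_iInter]
  simp only [commonBelief, Function.iterate_succ_apply']

theorem subset_commonBelief_of_subset_box_inter {E F : Set Ω} (hF : F ⊆ box P (E ∩ F)) :
    F ⊆ commonBelief P E := by
  refine subset_iInter fun k => ?_
  induction k with
  | zero => exact hF.trans (box_mono P inter_subset_left)
  | succ k ih =>
    rw [Function.iterate_succ_apply']
    exact hF.trans (box_mono P (inter_subset_right.trans ih))

end

theorem commonBelief_eq_sUnion_general {ι Ω : Type*} (P : ι → Ω → Set Ω)
    (E : Set Ω) :
    commonBelief P E = ⋃₀ {F : Set Ω | F ⊆ box P (E ∩ F)} :=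
  subset_antisymm (subset_sUnion_of_mem (box_inter_commonBelief P E).ge)
    (sUnion_subset fun _ hF => subset_commonBelief_of_subset_box_inter P hF)

/-- for all belief correspondences `P_1, …, P_n` on a nonempty set of
states `Ω` and every event `E`, the common belief event satisfies
`□*E = ⋃ {F ⊆ Ω | F ⊆ □(E ∩ F)}`. -/
theorem commonBelief_eq_sUnion {ι Ω : Type*} [Nonempty Ω] (P : ι → Ω → Set Ω)
    (hP1 : ∀ i ω, (P i ω).Nonempty)
    (hP2 : ∀ i ω ω', ω' ∈ P i ω → P i ω' = P i ω)
    (E : Set Ω) :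
    commonBelief P E = ⋃₀ {F : Set Ω | F ⊆ box P (E ∩ F)} :=
  commonBelief_eq_sUnion_general P E
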